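/- Let d ≥ 2 and M ≥ 2, and let z_1,...,z_M be points of the open unit simplex in ℝ^d, at least two of which are distinct. Then the negative Dirichlet log-likelihood f(α) = M(∑_i log Γ(α_i) - log Γ(∑_i α_i)) - ∑_m ∑_i (α_i - 1) log z_{m,i}, defined on (0,∞)^d and extended by +∞ elsewhere, is coercive: f(α) → +∞ as ‖α‖ → ∞ with α ∈ (0,∞)^d. -/

import Mathlib

/-!
Let `g i` be the geometric mean of the `i`-th coordinates of the samples. The data term equals
`M * ∑ i, (α i - 1) * log (g i)`, and strict AM-GM (the samples are not all equal) gives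
`∑ i, g i < 1`. The elementary Stirling bounds `x log x - x - log⁺ x ≤ log Γ(x)` and
`log Γ(s) ≤ s log s - s + 1` for `s ≥ 1`, together with `α log (g s / α) ≤ g s - α`, show that
`f(α) / M ≥ (1 - ∑ i, g i) s - d log s - C` with `s = ∑ i, α i`. This tends to `∞`, since
`‖α‖ ≤ s` on the positive orthant.
-/

open Finset Filter Real Asymptotics

theorem forall_ge_of_Icc_of_add_one {P : ℝ → Prop} {a : ℝ}
    (hbase : ∀ x ∈ Set.Icc a (a + 1), P x) (hstep : ∀ x, a ≤ x → P x → P (x + 1)) :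
    ∀ x, a ≤ x → P x := by
  suffices ∀ n : ℕ, ∀ x, a ≤ x → x ≤ a + 1 + n → P x by
    intro x hx
    obtain ⟨n, hn⟩ := exists_nat_ge (x - a)
    exact this n x hx (by linarith)
  intro n
  induction n with
  | zero => exact fun x hx hx' => hbase x ⟨hx, by simpa using hx'⟩
  | succ n ih =>
    intro x hx hx'
    rcases le_or_gt x (a + 1) with h | h
    · exact hbase x ⟨hx, h⟩
    · have hprev : P (x - 1) := ih (x - 1) (by linarith) (by push_cast at hx'; linarith)
      simpa using hstep (x - 1) (by linarith) hprev

theorem log_add_one_sub_log_bounds {x : ℝ} (hx : 0 < x) :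
    1 ≤ (x + 1) * (log (x + 1) - log x) ∧ x * (log (x + 1) - log x) ≤ 1 := by
  have hdiv : log ((x + 1) / x) = log (x + 1) - log x := log_div (by positivity) hx.ne'
  constructor
  · have := one_sub_inv_le_log_of_pos (show 0 < (x + 1) / x by positivity)
    rw [hdiv, inv_div, one_sub_div (by positivity), add_sub_cancel_left] at this
    rwa [div_le_iff₀' (by positivity)] at this
  · have := log_le_sub_one_of_pos (show 0 < (x + 1) / x by positivity)
    rw [hdiv, div_sub_one hx.ne', add_sub_cancel_left] at this
    rwa [le_div_iff₀' hx] at this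

theorem log_Gamma_add_one {x : ℝ} (hx : 0 < x) :
    log (Gamma (x + 1)) = log (Gamma x) + log x := by
  rw [Gamma_add_one hx.ne', log_mul hx.ne' (Gamma_pos_of_pos hx).ne', add_comm]

theorem sub_one_le_mul_log {x : ℝ} (hx : 0 < x) : x - 1 ≤ x * log x := by
  have := one_sub_inv_le_log_of_pos hx
  have := mul_le_mul_of_nonneg_left this hx.le
  rwa [mul_sub, mul_one, mul_inv_cancel₀ hx.ne'] at this

theorem log_Gamma_le {x : ℝ} (hx : 1 ≤ x) : log (Gamma x) ≤ x * log x - x + 1 := by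
  refine forall_ge_of_Icc_of_add_one (P := fun y => log (Gamma y) ≤ y * log y - y + 1)
    (fun y hy => ?_) (fun y hy ih => ?_) x hx
  · have hΓ : Gamma y ≤ 1 := by
      have := convexOn_Gamma.le_on_segment (x := 1) (y := 2) (by norm_num) (by norm_num)
        (by rwa [segment_eq_Icc (by norm_num), ← one_add_one_eq_two])
      simpa using this
    have := log_nonpos (Gamma_pos_of_pos (by linarith [hy.1])).le hΓ
    linarith [sub_one_le_mul_log (by linarith [hy.1] : 0 < y)]
  · rw [log_Gamma_add_one (by linarith)]
    linarith [(log_add_one_sub_log_bounds (by linarith : 0 < y)).1]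

theorem mul_log_sub_sub_posLog_le_log_Gamma {x : ℝ} (hx : 0 < x) :
    x * log x - x - log⁺ x ≤ log (Gamma x) := by
  rcases lt_or_ge x 1 with hx1 | hx1
  · have hΓ : 1 ≤ Gamma x := by
      simpa using Gamma_strictAntiOn_Ioc.antitoneOn ⟨hx, hx1.le⟩ ⟨one_pos, le_rfl⟩ hx1.le
    linarith [log_nonneg hΓ, posLog_nonneg (x := x),
      mul_nonpos_of_nonneg_of_nonpos hx.le (log_nonpos hx.le hx1.le)]
  rw [posLog_eq_log (by rwa [abs_of_pos hx])]
  refine forall_ge_of_Icc_of_add_one (P := fun y => y * log y - y - log y ≤ log (Gamma y))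
    (fun y hy => ?_) (fun y hy ih => ?_) x hx1
  · have hy0 : 0 < y := by linarith [hy.1]
    have hΓ : 1 ≤ Gamma (y + 1) := by
      simpa using Gamma_strictMonoOn_Ici.monotoneOn (a := 2) (by norm_num)
        (Set.mem_Ici.mpr (by linarith [hy.1])) (by linarith [hy.1])
    have hlog : log y ≤ 1 := by linarith [log_le_sub_one_of_pos hy0, hy.2]
    have := log_Gamma_add_one hy0 ▸ log_nonneg hΓ
    nlinarith
  · rw [log_Gamma_add_one (by linarith)]
    linarith [(log_add_one_sub_log_bounds (by linarith : 0 < y)).2]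

theorem mul_sub_sum_le_sum_mul_log {ι : Type*} [Fintype ι] (α g : ι → ℝ) (hα : ∀ i, 0 < α i)
    (hg : ∀ i, 0 < g i) :
    (∑ i, α i) * (1 - ∑ i, g i) ≤
      ∑ i, α i * log (α i) - (∑ i, α i) * log (∑ i, α i) - ∑ i, α i * log (g i) := by
  set s := ∑ i, α i
  have hpt : ∀ i, α i * (log (g i) + log s - log (α i)) ≤ s * g i - α i := by
    intro i
    have hs : 0 < s := (hα i).trans_le (single_le_sum (fun j _ => (hα j).le) (mem_univ i))
    have hαi := hα i
    have hgi := hg i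
    have := log_le_sub_one_of_pos (show 0 < g i * s / α i by positivity)
    rw [log_div (by positivity) hαi.ne', log_mul hgi.ne' hs.ne',
      le_sub_iff_add_le, le_div_iff₀' (hα i)] at this
    linarith
  have := sum_le_sum fun i (_ : i ∈ univ) => hpt i
  simp only [mul_sub, mul_add, sum_sub_distrib, sum_add_distrib, ← sum_mul, ← mul_sum] at this ⊢
  linarith

theorem sum_geom_mean_lt_one {ι κ : Type*} [Fintype ι] [Fintype κ] (z : κ → ι → ℝ)
    (hz : ∀ m i, 0 ≤ z m i) (hsum : ∀ m, ∑ i, z m i = 1) (hne : ∃ m m', z m ≠ z m') :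
    ∑ i, ∏ m, z m i ^ (Fintype.card κ : ℝ)⁻¹ < 1 := by
  obtain ⟨m, m', hmm'⟩ := hne
  obtain ⟨i₀, hi₀⟩ := Function.ne_iff.mp hmm'
  have hcard : (0 : ℝ) < Fintype.card κ := by
    exact_mod_cast Fintype.card_pos_iff.mpr ⟨m⟩
  have hw : ∑ _m : κ, (Fintype.card κ : ℝ)⁻¹ = 1 := by
    simp [card_univ, hcard.ne']
  have amgm (i : ι) := geom_mean_le_arith_mean_weighted univ (fun _ => (Fintype.card κ : ℝ)⁻¹)
    (fun m => z m i) (fun _ _ => by positivity) hw (fun m _ => hz m i)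
  have amgm_lt := (geom_mean_lt_arith_mean_weighted_iff_of_pos univ
    (fun _ => (Fintype.card κ : ℝ)⁻¹) (fun m => z m i₀) (fun _ _ => by positivity) hw
    (fun m _ => hz m i₀)).mpr ⟨m, mem_univ _, m', mem_univ _, hi₀⟩
  calc ∑ i, ∏ m, z m i ^ (Fintype.card κ : ℝ)⁻¹
      < ∑ i, ∑ m, (Fintype.card κ : ℝ)⁻¹ * z m i :=
        sum_lt_sum (fun i _ => amgm i) ⟨i₀, mem_univ _, amgm_lt⟩
    _ = 1 := by rw [sum_comm]; simp [← mul_sum, hsum, hw]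

theorem sum_log_Gamma_sub_log_Gamma_sum_ge {ι : Type*} [Fintype ι] (α g : ι → ℝ)
    (hα : ∀ i, 0 < α i) (hg : ∀ i, 0 < g i) (hs : 1 ≤ ∑ i, α i) :
    (∑ i, α i) * (1 - ∑ i, g i) - Fintype.card ι * log (∑ i, α i) + (∑ i, log (g i) - 1) ≤
      ∑ i, log (Gamma (α i)) - log (Gamma (∑ i, α i)) - ∑ i, (α i - 1) * log (g i) := by
  set s := ∑ i, α i
  have hlower := sum_le_sum fun i (_ : i ∈ univ) => mul_log_sub_sub_posLog_le_log_Gamma (hα i)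
  have hposLog : ∑ i, log⁺ (α i) ≤ Fintype.card ι * log s := by
    rw [← posLog_eq_log (by rwa [abs_of_pos (by linarith)])]
    simpa using sum_le_sum fun i (_ : i ∈ univ) =>
      posLog_le_posLog (hα i).le (single_le_sum (fun j _ => (hα j).le) (mem_univ i))
  have hupper := log_Gamma_le hs
  have hgibbs := mul_sub_sum_le_sum_mul_log α g hα hg
  simp only [sub_mul, one_mul, sum_sub_distrib] at hlower ⊢
  linarith

theorem tendsto_mul_sub_mul_log_add_atTop {c : ℝ} (hc : 0 < c) (a b : ℝ) :
    Tendsto (fun t => c * t - a * log t + b) atTop atTop := by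
  have hlog : (fun t => a * log t) =o[atTop] fun t => c * t :=
    (isLittleO_log_id_atTop.const_mul_left a).const_mul_right hc.ne'
  have hequiv : (fun t => c * t - a * log t) ~[atTop] fun t => c * t := by
    refine hlog.neg_left.congr_left fun t => ?_
    simp
  exact tendsto_atTop_add_const_right _ b
    (hequiv.symm.tendsto_atTop (tendsto_id.const_mul_atTop hc))

theorem tendsto_sum_comap_norm_inf_principal {ι : Type*} [Fintype ι] :
    Tendsto (fun α : ι → ℝ => ∑ i, α i)
      (comap (‖·‖) atTop ⊓ 𝓟 {α | ∀ i, 0 ≤ α i}) atTop := by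
  refine tendsto_atTop_mono' _ ?_ (tendsto_comap.mono_left inf_le_left)
  filter_upwards [le_principal_iff.mp inf_le_right] with α hα
  exact (pi_norm_le_iff_of_nonneg (sum_nonneg fun i _ => hα i)).mpr fun i => by
    rw [Real.norm_eq_abs, abs_of_nonneg (hα i)]
    exact single_le_sum (fun j _ => hα j) (mem_univ i)

theorem dirichlet_nll_coercive_general (d M : ℕ)
    (z : Fin M → Fin d → ℝ)
    (hpos : ∀ m i, 0 < z m i) (hsum : ∀ m, ∑ i, z m i = 1)
    (hdistinct : ∃ m m', z m ≠ z m') :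
    Tendsto
      (fun α : Fin d → ℝ =>
        (M : ℝ) * (∑ i, Real.log (Real.Gamma (α i))
            - Real.log (Real.Gamma (∑ i, α i)))
          - ∑ m, ∑ i, (α i - 1) * Real.log (z m i))
      ((Filter.comap (fun α : Fin d → ℝ => ‖α‖) atTop) ⊓
        Filter.principal {α : Fin d → ℝ | ∀ i, 0 < α i})
      atTop := by
  set g : Fin d → ℝ := fun i => ∏ m, z m i ^ (M : ℝ)⁻¹
  have hg : ∀ i, 0 < g i := fun i => prod_pos fun m _ => rpow_pos_of_pos (hpos m i) _
  have hG : ∑ i, g i < 1 := by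
    simpa using sum_geom_mean_lt_one z (fun m i => (hpos m i).le) hsum hdistinct
  have hM0 : (0 : ℝ) < M := Nat.cast_pos.mpr (Fin.pos hdistinct.choose)
  have hdata (α : Fin d → ℝ) :
      ∑ m, ∑ i, (α i - 1) * log (z m i) = M * ∑ i, (α i - 1) * log (g i) := by
    have hlog_g (i : Fin d) : log (g i) = (M : ℝ)⁻¹ * ∑ m, log (z m i) := by
      simp only [g, log_prod fun m _ => (rpow_pos_of_pos (hpos m i) _).ne',
        log_rpow (hpos _ i), mul_sum]
    rw [sum_comm, mul_sum]
    refine sum_congr rfl fun i _ => ?_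
    rw [← mul_sum, hlog_g]
    field_simp
  have hF := (tendsto_sum_comap_norm_inf_principal (ι := Fin d)).mono_left
    (inf_le_inf_left _ (principal_mono.mpr fun α (hα : ∀ i, 0 < α i) i => (hα i).le))
  refine tendsto_atTop_mono' _ ?_ (((tendsto_mul_sub_mul_log_add_atTop (sub_pos.mpr hG) d
    (∑ i, log (g i) - 1)).const_mul_atTop hM0).comp hF)
  filter_upwards [le_principal_iff.mp inf_le_right, hF.eventually_ge_atTop 1] with α hα hs
  have := sum_log_Gamma_sub_log_Gamma_sum_ge α g hα hg hs
  simp only [Function.comp_apply, hdata, Fintype.card_fin] at this ⊢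
  linarith [mul_le_mul_of_nonneg_left this hM0.le]

/-- Coercivity of the negative Dirichlet log-likelihood: if at least two of the
simplex samples are distinct, then `f(α) → +∞` as `‖α‖ → ∞` within `(0,∞)^d`. -/
theorem dirichlet_nll_coercive (d M : ℕ) (hd : 2 ≤ d) (hM : 2 ≤ M)
    (z : Fin M → Fin d → ℝ)
    (hpos : ∀ m i, 0 < z m i) (hsum : ∀ m, ∑ i, z m i = 1)
    (hdistinct : ∃ m m', z m ≠ z m') :
    Tendsto
      (fun α : Fin d → ℝ =>
        (M : ℝ) * (∑ i, Real.log (Real.Gamma (α i))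
            - Real.log (Real.Gamma (∑ i, α i)))
          - ∑ m, ∑ i, (α i - 1) * Real.log (z m i))
      ((Filter.comap (fun α : Fin d → ℝ => ‖α‖) atTop) ⊓
        Filter.principal {α : Fin d → ℝ | ∀ i, 0 < α i})
      atTop :=
  dirichlet_nll_coercive_general d M z hpos hsum hdistinct
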